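/- arXiv:2102.02593 — 9 statements merged into one kernel-verified Lean document; each statement's English description precedes it below -/
import Mathlib

section
/- Let R be an n×n real matrix with zero diagonal (R i i = 0 for all i). If there exist positive reals λ_1,...,λ_n such that for every permutation σ of {1,...,n}, Σ_i λ_i · R i (σ i) ≥ 0, then R is cyclically consistent, i.e., for every cycle i_1,...,i_{p+1}=i_1 with R i_k i_{k+1} ≤ 0 for all k, one has R i_k i_{k+1} = 0 for all k. -/
/-- identity optimal for some positive weights implies cyclical consistency. -/
theorem stmt_2 {n : ℕ} (R : Fin n → Fin n → ℝ) (hdiag : ∀ i, R i i = 0)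
    (w : Fin n → ℝ) (hw : ∀ i, 0 < w i)
    (hopt : ∀ σ : Equiv.Perm (Fin n), 0 ≤ ∑ i, w i * R i (σ i)) :
    ∀ (p : ℕ) (c : ℕ → Fin n), c p = c 0 →
      (∀ k < p, R (c k) (c (k + 1)) ≤ 0) → ∀ k < p, R (c k) (c (k + 1)) = 0 := by
  intro p
  induction p using Nat.strong_induction_on with
  | _ p ih =>
    intro c hcyc hle
    by_cases hinj : ∀ a b : ℕ, a < b → b < p → c a ≠ c b
    · -- injective case: build the permutation from the list
      intro k hk
      set l : List (Fin n) := (List.range p).map c with hl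
      have hlen : l.length = p := by simp [hl]
      have hnd : l.Nodup := by
        apply List.Nodup.map_on _ List.nodup_range
        intro x hx y hy hxy
        simp only [List.mem_range] at hx hy
        by_contra hne
        rcases lt_or_gt_of_ne hne with h | h
        · exact hinj x y h hy hxy
        · exact hinj y x h hx hxy.symm
      set σ : Equiv.Perm (Fin n) := l.formPerm with hσ
      have hget : ∀ (i : ℕ) (h : i < p), l[i]'(by omega) = c i := by
        intro i h; simp [hl]
      have happ : ∀ j < p, σ (c j) = c (j + 1) := by
        intro j hj
        have h1 : σ (c j) = l[(j+1) % l.length]'(Nat.mod_lt _ (by omega)) := by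
          rw [← hget j hj]
          exact List.formPerm_apply_getElem l hnd j (by omega)
        rw [h1]
        rcases Nat.lt_or_ge (j+1) p with h | h
        · rw [hget ((j+1) % l.length) (by rw [hlen]; exact Nat.mod_lt _ (by omega))]
          congr 1
          rw [hlen]
          exact Nat.mod_eq_of_lt h
        · have hjp : j + 1 = p := by omega
          have : (j+1) % l.length = 0 := by rw [hlen, hjp]; simp
          simp only [this]
          rw [hget 0 (by omega), ← hcyc, hjp]
      -- off-cycle elements are fixed
      have hfix : ∀ x : Fin n, x ∉ l → σ x = x := fun x hx =>
        List.formPerm_apply_of_notMem hx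
      have hsum : ∑ i, w i * R i (σ i)
          = ∑ j ∈ Finset.range p, w (c j) * R (c j) (c (j + 1)) := by
        rw [← Finset.sum_subset (Finset.subset_univ ((Finset.range p).image c))]
        · rw [Finset.sum_image]
          · apply Finset.sum_congr rfl
            intro j hj
            rw [happ j (Finset.mem_range.mp hj)]
          · intro x hx y hy hxy
            simp only [Finset.mem_coe, Finset.mem_range] at hx hy
            by_contra hne
            rcases lt_or_gt_of_ne hne with h | h
            · exact hinj x y h hy hxy
            · exact hinj y x h hx hxy.symm
        · intro x _ hx
          have hxl : x ∉ l := by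
            simp only [hl, List.mem_map, List.mem_range]
            simp only [Finset.mem_image, Finset.mem_range] at hx
            tauto
          rw [hfix x hxl, hdiag, mul_zero]
      have hterm : ∀ j ∈ Finset.range p, w (c j) * R (c j) (c (j + 1)) ≤ 0 := by
        intro j hj
        exact mul_nonpos_of_nonneg_of_nonpos (hw _).le (hle j (Finset.mem_range.mp hj))
      have hzero : ∑ j ∈ Finset.range p, w (c j) * R (c j) (c (j + 1)) = 0 := by
        have h1 := hopt σ
        rw [hsum] at h1
        exact le_antisymm (Finset.sum_nonpos hterm) h1
      have := (Finset.sum_eq_zero_iff_of_nonpos hterm).mp hzero k (Finset.mem_range.mpr hk)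
      rcases mul_eq_zero.mp this with h | h
      · exact absurd h (ne_of_gt (hw _))
      · exact h
    · -- non-injective: split into two shorter cycles
      push_neg at hinj
      obtain ⟨a, b, hab, hbp, hcab⟩ := hinj
      -- inner cycle c a, c (a+1), ..., c b
      have h1 : ∀ k < b - a, R (c (a + k)) (c (a + k + 1)) = 0 := by
        apply ih (b - a) (by omega) (fun k => c (a + k))
        · show c (a + (b - a)) = c (a + 0)
          rw [Nat.add_sub_cancel' hab.le, Nat.add_zero]
          exact hcab.symm
        · intro k hk
          exact hle (a + k) (by omega)
      -- outer cycle: c 0, ..., c a (= c b), c (b+1), ..., c p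
      set q := p - (b - a) with hq
      set c2 : ℕ → Fin n := fun j => if j < a then c j else c (j + (b - a)) with hc2
      have hqa : a ≤ q := by omega
      have hc2val : ∀ j, a ≤ j → c2 j = c (j + (b - a)) := by
        intro j hj; simp only [hc2]; rw [if_neg (by omega)]
      have hc2val' : ∀ j, j < a → c2 j = c j := by
        intro j hj; simp only [hc2]; rw [if_pos hj]
      have hc2a : c2 a = c a := by
        rw [hc2val a le_rfl, Nat.add_sub_cancel' hab.le, ← hcab]
      have hc2zero : c2 0 = c 0 := by
        rcases Nat.eq_zero_or_pos a with h | h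
        · rw [← h]; exact hc2a
        · exact hc2val' 0 h
      have hstep : ∀ k < q, R (c2 k) (c2 (k + 1)) ≤ 0 ∧
          ∃ m < p, c2 k = c m ∧ c2 (k + 1) = c (m + 1) := by
        intro k hk
        rcases Nat.lt_or_ge k a with h | h
        · rcases Nat.lt_or_ge (k + 1) a with h' | h'
          · refine ⟨?_, k, by omega, hc2val' k h, hc2val' (k+1) h'⟩
            rw [hc2val' k h, hc2val' (k+1) h']
            exact hle k (by omega)
          · have hka : k + 1 = a := by omega
            refine ⟨?_, k, by omega, hc2val' k h, ?_⟩
            · rw [hc2val' k h, hka, hc2a, ← hka]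
              exact hle k (by omega)
            · rw [hka, hc2a]
        · refine ⟨?_, k + (b - a), by omega, hc2val k h, ?_⟩
          · rw [hc2val k h, hc2val (k+1) (by omega)]
            have : k + 1 + (b - a) = k + (b - a) + 1 := by omega
            rw [this]
            exact hle (k + (b - a)) (by omega)
          · rw [hc2val (k+1) (by omega)]
            congr 1
            omega
      have h2 : ∀ k < q, R (c2 k) (c2 (k + 1)) = 0 := by
        apply ih q (by omega) c2
        · rw [hc2zero, hc2val q hqa, ← hcyc]
          congr 1
          omega
        · intro k hk
          exact (hstep k hk).1
      -- combine
      intro k hk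
      rcases Nat.lt_or_ge k a with h | h
      · -- k < a : use outer cycle at index k
        obtain ⟨hle2, m, hm, he1, he2⟩ := hstep k (by omega)
        have hz := h2 k (by omega)
        rw [hc2val' k h] at hz
        rcases Nat.lt_or_ge (k + 1) a with h' | h'
        · rwa [hc2val' (k+1) h'] at hz
        · have hka : k + 1 = a := by omega
          rwa [hka, hc2a, ← hka] at hz
      · rcases Nat.lt_or_ge k b with h' | h'
        · -- a ≤ k < b : inner cycle at index k - a
          have := h1 (k - a) (by omega)
          have e1 : a + (k - a) = k := by omega
          rwa [e1] at this
        · -- b ≤ k < p : outer cycle at index k - (b - a)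
          have hz := h2 (k - (b - a)) (by omega)
          rw [hc2val (k - (b - a)) (by omega), hc2val (k - (b - a) + 1) (by omega)] at hz
          have e1 : k - (b - a) + (b - a) = k := by omega
          have e2 : k - (b - a) + 1 + (b - a) = k + 1 := by omega
          rwa [e1, e2] at hz
end

section
/- Let K be an n×n real matrix with zero diagonal (K i i = 0). Suppose that for every permutation σ of {1,...,n}, Σ_i K i (σ i) ≥ 0 (i.e., the identity permutation minimizes the assignment cost). Then there exist real numbers v_1,...,v_n such that v_j − v_i ≤ K i j for all i, j. -/
/-!
The potentials are shortest-walk costs: `v i = -u i`, where `u i` is the least cost of a walk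
through distinct vertices starting at `i`. The inequality `u i ≤ K i j + u j` holds because
prepending `i` to a simple walk from `j` either gives a simple walk from `i`, or closes a simple
cycle through `i` followed by a simple walk from `i`. The cost of a simple cycle is
`∑ x, K x (σ x)` for the cyclic permutation `σ` it traverses (the zero diagonal accounts for the
fixed points), so it is nonnegative by optimality of the identity.
-/

theorem List.map_formPerm_eq_rotate {α : Type*} [DecidableEq α] {l : List α} (hl : l.Nodup) :
    l.map l.formPerm = l.rotate 1 :=
  List.ext_getElem (by simp) fun i _ _ => by
    simp [List.formPerm_apply_getElem _ hl, List.getElem_rotate]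

section WalkCost

variable {α : Type*} (K : α → α → ℝ)

def walkCost : List α → ℝ
  | [] => 0
  | [_] => 0
  | a :: b :: l => K a b + walkCost (b :: l)

theorem walkCost_eq_sum_zipWith : ∀ l : List α, walkCost K l = (l.zipWith K l.tail).sum
  | [] | [_] => rfl
  | a :: b :: l => by simp [walkCost, walkCost_eq_sum_zipWith (b :: l)]

theorem walkCost_append_cons (a : α) (l₂ : List α) :
    ∀ l₁ : List α, walkCost K (l₁ ++ a :: l₂) = walkCost K (l₁ ++ [a]) + walkCost K (a :: l₂)
  | [] => by simp [walkCost]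
  | [_] => by simp [walkCost]
  | x :: y :: t => by
    change K x y + walkCost K (y :: t ++ a :: l₂) = K x y + walkCost K (y :: t ++ [a]) + _
    rw [walkCost_append_cons a l₂ (y :: t), add_assoc]

theorem sum_apply_formPerm_eq_walkCost [Fintype α] [DecidableEq α] (hK : ∀ i, K i i = 0) {a : α}
    {l : List α} (hl : (a :: l).Nodup) :
    ∑ x, K x ((a :: l).formPerm x) = walkCost K (a :: l ++ [a]) := by
  set σ := (a :: l).formPerm
  have hfix : ∀ x ∈ Finset.univ, x ∉ (a :: l).toFinset → K x (σ x) = 0 := fun x _ hx => by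
    rw [List.formPerm_apply_of_notMem (by simpa using hx), hK]
  calc ∑ x, K x (σ x) = ∑ x ∈ (a :: l).toFinset, K x (σ x) :=
        (Finset.sum_subset (Finset.subset_univ _) hfix).symm
    _ = ((a :: l).zipWith K ((a :: l).map σ)).sum := by
        rw [List.sum_toFinset _ hl, List.zipWith_map_right, List.zipWith_self]
    _ = walkCost K (a :: l ++ [a]) := by
        rw [List.map_formPerm_eq_rotate hl, List.rotate_cons_succ, List.rotate_zero,
          walkCost_eq_sum_zipWith]
        refine congrArg List.sum (Eq.symm ?_)
        simpa using List.zipWith_append (f := K) (l₁ := a :: l) (l₁' := [a]) (l₂ := l ++ [a])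
          (l₂' := []) (by simp)

def NoNegativeCycle : Prop :=
  ∀ (a : α) (l : List α), (a :: l).Nodup → 0 ≤ walkCost K (a :: l ++ [a])

theorem noNegativeCycle_of_sum_apply_perm_nonneg [Fintype α] [DecidableEq α]
    (hK : ∀ i, K i i = 0) (hperm : ∀ σ : Equiv.Perm α, 0 ≤ ∑ i, K i (σ i)) :
    NoNegativeCycle K := fun _ _ hl =>
  sum_apply_formPerm_eq_walkCost K hK hl ▸ hperm _

def simpleWalkCostsFrom (i : α) : Set ℝ :=
  (fun l => walkCost K (i :: l)) '' {l | (i :: l).Nodup}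

theorem walkCost_mem_simpleWalkCostsFrom {i : α} {l : List α} (hl : (i :: l).Nodup) :
    walkCost K (i :: l) ∈ simpleWalkCostsFrom K i :=
  ⟨l, hl, rfl⟩

variable [Fintype α]

theorem finite_simpleWalkCostsFrom (i : α) : (simpleWalkCostsFrom K i).Finite :=
  ((List.finite_length_le α (Fintype.card α)).subset fun _ hl =>
    (List.nodup_cons.mp hl).2.length_le_card).image _

noncomputable def minWalkCost (i : α) : ℝ := sInf (simpleWalkCostsFrom K i)

theorem minWalkCost_le {i : α} {l : List α} (hl : (i :: l).Nodup) :
    minWalkCost K i ≤ walkCost K (i :: l) :=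
  csInf_le (finite_simpleWalkCostsFrom K i).bddBelow (walkCost_mem_simpleWalkCostsFrom K hl)

theorem minWalkCost_le_add (hK : NoNegativeCycle K) (i : α) {j : α} {l : List α}
    (hl : (j :: l).Nodup) : minWalkCost K i ≤ K i j + walkCost K (j :: l) := by
  by_cases hi : i ∈ j :: l
  -- Then `i :: j :: l` is a simple cycle through `i` followed by a simple walk from `i`.
  · obtain ⟨l₁, l₂, hsplit⟩ := List.append_of_mem hi
    rw [hsplit] at hl
    have hcycle := hK i l₁ ((List.nodup_middle.mp hl).sublist (by simp))
    have hpath := minWalkCost_le K (hl.sublist (List.sublist_append_right _ _))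
    have hcost := walkCost_append_cons K i l₂ (i :: l₁)
    rw [List.cons_append, ← hsplit, walkCost] at hcost
    linarith
  · exact minWalkCost_le K (List.nodup_cons.mpr ⟨hi, hl⟩)

theorem minWalkCost_le_add_minWalkCost (hK : NoNegativeCycle K) (i j : α) :
    minWalkCost K i ≤ K i j + minWalkCost K j := by
  rw [← sub_le_iff_le_add']
  exact le_csInf ⟨walkCost K [j], walkCost_mem_simpleWalkCostsFrom K (List.nodup_singleton j)⟩
    (by rintro _ ⟨l, hl, rfl⟩; linarith [minWalkCost_le_add K hK i hl])

theorem exists_potential_of_noNegativeCycle (hK : NoNegativeCycle K) :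
    ∃ v : α → ℝ, ∀ i j, v j - v i ≤ K i j :=
  ⟨fun i => -minWalkCost K i, fun i j => by linarith [minWalkCost_le_add_minWalkCost K hK i j]⟩

end WalkCost

/-- LP duality for the assignment problem: if the identity is optimal
then dual potentials exist. -/
theorem stmt_4 {n : ℕ} (K : Fin n → Fin n → ℝ) (hdiag : ∀ i, K i i = 0)
    (hopt : ∀ σ : Equiv.Perm (Fin n), 0 ≤ ∑ i, K i (σ i)) :
    ∃ v : Fin n → ℝ, ∀ i j, v j - v i ≤ K i j :=
  exists_potential_of_noNegativeCycle K (noNegativeCycle_of_sum_apply_perm_nonneg K hdiag hopt)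
end

section
/- Let K be an n×n real matrix. K is cyclically monotone (for every cycle i_1,...,i_{p+1}=i_1, Σ_{k=1}^{p} (K i_k i_{k+1} − K i_k i_k) ≥ 0) if and only if for every permutation σ of {1,...,n}, Σ_i K i (σ i) ≥ Σ_i K i i. -/
/-!
If the identity is an optimal assignment, a closed walk visiting no vertex twice is the cycle of a
permutation fixing all other points, so its cost is nonnegative; a closed walk with a repeated
vertex splits there into two shorter closed walks. Conversely, if `σ` has order `p`, the `p`-step
walks `k ↦ σ ^ k i`, one from each start `i`, are closed and together traverse every edge
`(i, σ i)` exactly `p` times, so `p` times the excess cost of `σ` over the identity is a sum of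
closed-walk costs.
-/

open Finset Equiv

namespace CyclicMonotonicity

variable {α : Type*}

section AddCommMonoid

variable {M : Type*} [AddCommMonoid M]

def walkSum (g : α → α → M) (c : ℕ → α) (p : ℕ) : M :=
  ∑ k ∈ range p, g (c k) (c (k + 1))

def splice (c : ℕ → α) (j d : ℕ) : ℕ → α :=
  fun m => if m < j then c m else c (m + d)

theorem walkSum_eq_add_splice (g : α → α → M) (c : ℕ → α) (j d r : ℕ) (h : c (j + d) = c j) :
    walkSum g c (j + d + r) =
      walkSum g (fun m => c (j + m)) d + walkSum g (splice c j d) (j + r) := by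
  have head : ∀ m ∈ range j,
      g (splice c j d m) (splice c j d (m + 1)) = g (c m) (c (m + 1)) := by
    intro m hm
    have hm := mem_range.1 hm
    obtain hlt | rfl : m + 1 < j ∨ m + 1 = j := by omega
    · simp only [splice, if_pos hm, if_pos hlt]
    · simp only [splice, if_pos hm, lt_irrefl, if_false, h]
  have tail : ∀ m ∈ range r, g (splice c j d (j + m)) (splice c j d (j + m + 1)) =
      g (c (j + d + m)) (c (j + d + m + 1)) := by
    intro m _
    simp only [splice, if_neg (by omega : ¬j + m < j), if_neg (by omega : ¬j + m + 1 < j)]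
    rw [Nat.add_right_comm j m d, Nat.add_right_comm (j + m) 1 d, Nat.add_right_comm j m d]
  simp only [walkSum, sum_range_add]
  rw [sum_congr rfl head, sum_congr rfl tail]
  simp only [add_assoc]
  abel

theorem walkSum_eq_sum_perm [Fintype α] [DecidableEq α] {g : α → α → M} (hg : ∀ a, g a a = 0)
    {c : ℕ → α} {p : ℕ} (hinj : Set.InjOn c (range p)) {σ : Perm α}
    (hσc : ∀ k < p, σ (c k) = c (k + 1)) (hσ : ∀ x ∉ (range p).image c, σ x = x) :
    walkSum g c p = ∑ i, g i (σ i) := by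
  rw [← sum_subset (subset_univ _) fun x _ hx => by rw [hσ x hx, hg], sum_image hinj]
  exact sum_congr rfl fun k hk => by rw [hσc k (mem_range.1 hk)]

theorem sum_walkSum_pow [Fintype α] (g : α → α → M) (σ : Perm α) (p : ℕ) :
    ∑ i, walkSum g (fun k => (σ ^ k) i) p = p • ∑ i, g i (σ i) := by
  have hshift : ∀ k, ∑ i, g ((σ ^ k) i) ((σ ^ (k + 1)) i) = ∑ i, g i (σ i) := fun k => by
    simp only [pow_succ', Perm.mul_apply]
    exact Equiv.sum_comp (σ ^ k) fun i => g i (σ i)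
  simp only [walkSum]
  rw [sum_comm, sum_congr rfl fun k _ => hshift k, sum_const, card_range]

end AddCommMonoid

theorem exists_perm_of_injOn [DecidableEq α] (c : ℕ → α) {p : ℕ} (hc : c p = c 0)
    (hinj : Set.InjOn c (range p)) :
    ∃ σ : Perm α, (∀ k < p, σ (c k) = c (k + 1)) ∧ ∀ x ∉ (range p).image c, σ x = x := by
  set l := (List.range p).map c
  have hl : l.Nodup := List.nodup_range.map_on fun x hx y hy h =>
    hinj (by simpa using hx) (by simpa using hy) h
  refine ⟨l.formPerm, fun k hk => ?_,
    fun x hx => List.formPerm_apply_of_notMem (by simpa [l] using hx)⟩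
  have := List.formPerm_apply_getElem l hl k (by simpa [l])
  simp only [l, List.getElem_map, List.getElem_range, List.length_map, List.length_range] at this
  rw [this]
  obtain h | h : k + 1 < p ∨ k + 1 = p := by omega
  · rw [Nat.mod_eq_of_lt h]
  · rw [h, Nat.mod_self, hc]

variable {M : Type*} [AddCommGroup M] [LinearOrder M] [IsOrderedAddMonoid M]

def IsCyclicallyMonotone (K : α → α → M) : Prop :=
  ∀ (p : ℕ) (c : ℕ → α), c p = c 0 → 0 ≤ walkSum (fun a b => K a b - K a a) c p

theorem isCyclicallyMonotone_of_forall_perm [Fintype α] [DecidableEq α] {K : α → α → M}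
    (hK : ∀ σ : Perm α, ∑ i, K i i ≤ ∑ i, K i (σ i)) : IsCyclicallyMonotone K := by
  intro p
  induction p using Nat.strong_induction_on with | _ p ih =>
  intro c hc
  by_cases hinj : Set.InjOn c (range p)
  · obtain ⟨σ, hσc, hσ⟩ := exists_perm_of_injOn c hc hinj
    rw [walkSum_eq_sum_perm (fun a => sub_self (K a a)) hinj hσc hσ, sum_sub_distrib, sub_nonneg]
    exact hK σ
  obtain ⟨j, k, hjk, hkp, hcycle⟩ : ∃ j k, j < k ∧ k < p ∧ c k = c j := by
    simp only [Set.InjOn, not_forall, coe_range, Set.mem_Iio] at hinj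
    obtain ⟨x, hx, y, hy, hxy, hne⟩ := hinj
    rcases Nat.lt_or_gt_of_ne hne with h | h
    exacts [⟨x, y, h, hy, hxy.symm⟩, ⟨y, x, h, hx, hxy⟩]
  obtain ⟨d, rfl⟩ := Nat.exists_eq_add_of_le hjk.le
  obtain ⟨r, rfl⟩ := Nat.exists_eq_add_of_le hkp.le
  rw [walkSum_eq_add_splice _ _ _ _ _ hcycle]
  have hspliced : splice c j d (j + r) = splice c j d 0 := by
    have hend : splice c j d (j + r) = c 0 := by
      simp only [splice, if_neg (Nat.not_lt.2 (Nat.le_add_right j r)), ← hc]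
      congr 1; omega
    rw [hend]
    rcases j.eq_zero_or_pos with rfl | hj
    · simpa [splice] using hcycle.symm
    · simp [splice, hj]
  exact add_nonneg (ih _ (by omega) _ (by simpa using hcycle)) (ih _ (by omega) _ hspliced)

theorem forall_perm_of_isCyclicallyMonotone [Fintype α] {K : α → α → M}
    (hK : IsCyclicallyMonotone K) (σ : Perm α) : ∑ i, K i i ≤ ∑ i, K i (σ i) := by
  have hwalks : 0 ≤ orderOf σ • ∑ i, (K i (σ i) - K i i) := by
    rw [← sum_walkSum_pow (fun a b => K a b - K a a)]
    exact sum_nonneg fun i _ => hK _ _ (by simp [pow_orderOf_eq_one])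
  rw [← sub_nonneg, ← sum_sub_distrib]
  exact (nsmul_nonneg_iff (orderOf_pos σ).ne').1 hwalks

end CyclicMonotonicity

/-- cyclical monotonicity is equivalent to the identity being optimal
for the assignment problem. -/
theorem stmt_5 {n : ℕ} (K : Fin n → Fin n → ℝ) :
    (∀ (p : ℕ) (c : ℕ → Fin n), c p = c 0 →
        0 ≤ ∑ k ∈ Finset.range p, (K (c k) (c (k + 1)) - K (c k) (c k)))
      ↔ (∀ σ : Equiv.Perm (Fin n), ∑ i, K i i ≤ ∑ i, K i (σ i)) :=
  ⟨CyclicMonotonicity.forall_perm_of_isCyclicallyMonotone,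
    CyclicMonotonicity.isCyclicallyMonotone_of_forall_perm⟩
end

section
/- Let c be an n×n real matrix of costs and set R i j = c i j − c i i. The allocation σ_0(i) = i is Pareto efficient (for every permutation σ, if c i (σ i) ≤ c i i for all i then c i (σ i) = c i i for all i) if and only if R is cyclically consistent. -/
private lemma stmt6_aux {n : ℕ} (c : Fin n → Fin n → ℝ)
    (hP : ∀ σ : Equiv.Perm (Fin n), (∀ i, c i (σ i) ≤ c i i) → ∀ i, c i (σ i) = c i i) :
    ∀ p : ℕ, ∀ γ : ℕ → Fin n, γ p = γ 0 →
      (∀ k < p, c (γ k) (γ (k + 1)) - c (γ k) (γ k) ≤ 0) →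
      ∀ k < p, c (γ k) (γ (k + 1)) - c (γ k) (γ k) = 0 := by
  intro p
  induction p using Nat.strong_induction_on with
  | _ p IH =>
  intro γ hcyc hle k hk
  have hp : 0 < p := by omega
  by_cases hrep : ∃ a b, a < b ∧ b < p ∧ γ a = γ b
  · -- repeated vertex: split into two shorter cycles
    obtain ⟨a, b, hab, hbp, hgab⟩ := hrep
    -- cycle 1: γ₁ k = γ (a + k), length b - a
    set γ₁ : ℕ → Fin n := fun k => γ (a + k) with hγ₁
    have hc1 : γ₁ (b - a) = γ₁ 0 := by
      simp only [hγ₁]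
      rw [Nat.add_sub_cancel' hab.le, Nat.add_zero, ← hgab]
    have hle1 : ∀ j < b - a, c (γ₁ j) (γ₁ (j + 1)) - c (γ₁ j) (γ₁ j) ≤ 0 := by
      intro j hj
      have h1 : a + (j + 1) = (a + j) + 1 := by omega
      simp only [hγ₁, h1]
      exact hle (a + j) (by omega)
    have h1 := IH (b - a) (by omega) γ₁ hc1 hle1
    -- cycle 2: γ₂, length p - (b - a)
    set γ₂ : ℕ → Fin n := fun k => if k ≤ a then γ k else γ (k + (b - a)) with hγ₂
    have hp2a : a < p - (b - a) := by omega
    have hc2 : γ₂ (p - (b - a)) = γ₂ 0 := by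
      simp only [hγ₂]
      rw [if_neg (by omega), if_pos (Nat.zero_le _)]
      have : p - (b - a) + (b - a) = p := by omega
      rw [this, hcyc]
    have hle2 : ∀ j < p - (b - a), c (γ₂ j) (γ₂ (j + 1)) - c (γ₂ j) (γ₂ j) ≤ 0 := by
      intro j hj
      rcases lt_trichotomy j a with h | h | h
      · simp only [hγ₂]
        rw [if_pos h.le, if_pos (by omega)]
        exact hle j (by omega)
      · simp only [hγ₂]
        rw [if_pos h.le, if_neg (by omega)]
        have h1 : j + 1 + (b - a) = b + 1 := by omega
        rw [h1, h, hgab]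
        exact hle b hbp
      · simp only [hγ₂]
        rw [if_neg (by omega), if_neg (by omega)]
        have h1 : j + 1 + (b - a) = (j + (b - a)) + 1 := by omega
        rw [h1]
        exact hle (j + (b - a)) (by omega)
    have h2 := IH (p - (b - a)) (by omega) γ₂ hc2 hle2
    -- combine
    rcases lt_trichotomy k a with h | h | h
    · have := h2 k (by omega)
      simp only [hγ₂] at this
      rwa [if_pos h.le, if_pos (by omega)] at this
    · -- k = a : use the first cycle at 0
      subst h
      have := h1 0 (by omega)
      simp only [hγ₁] at this
      rwa [Nat.add_zero] at this
    · rcases Nat.lt_or_ge k b with h' | h'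
      · -- a < k < b : first cycle at k - a
        have := h1 (k - a) (by omega)
        simp only [hγ₁] at this
        have e1 : a + (k - a) = k := by omega
        have e2 : a + (k - a + 1) = k + 1 := by omega
        rwa [e1, e2] at this
      · -- b ≤ k : second cycle at k - (b - a)
        have := h2 (k - (b - a)) (by omega)
        simp only [hγ₂] at this
        rcases Nat.eq_or_lt_of_le h' with h'' | h''
        · -- k = b
          have e0 : k - (b - a) = a := by omega
          rw [e0, if_pos le_rfl, if_neg (by omega)] at this
          have e1 : a + 1 + (b - a) = k + 1 := by omega
          rw [e1, hgab, h''] at this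
          exact this
        · have e0 : ¬ (k - (b - a) ≤ a) := by omega
          rw [if_neg e0, if_neg (by omega)] at this
          have e1 : k - (b - a) + (b - a) = k := by omega
          have e2 : k - (b - a) + 1 + (b - a) = k + 1 := by omega
          rwa [e1, e2] at this
  · -- no repeats: γ injective on [0, p), build a permutation
    push_neg at hrep
    have hinj : ∀ a < p, ∀ b < p, γ a = γ b → a = b := by
      intro a ha b hb hab
      rcases lt_trichotomy a b with h | h | h
      · exact absurd hab (hrep a b h hb)
      · exact h
      · exact absurd hab.symm (hrep b a h ha)
    set f : Fin n → Fin n := fun x =>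
      if h : ∃ j, j < p ∧ γ j = x then γ ((h.choose + 1) % p) else x with hf
    have hmodγ : ∀ a, a < p → γ ((a + 1) % p) = γ (a + 1) := by
      intro a ha
      rcases (by omega : a + 1 = p ∨ a + 1 < p) with h | h
      · rw [h, Nat.mod_self, ← hcyc]
      · rw [Nat.mod_eq_of_lt h]
    have hval : ∀ j, j < p → f (γ j) = γ ((j + 1) % p) := by
      intro j hj
      have h : ∃ j', j' < p ∧ γ j' = γ j := ⟨j, hj, rfl⟩
      simp only [hf]
      rw [dif_pos h]
      have := h.choose_spec
      have : h.choose = j := hinj _ this.1 _ hj this.2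
      rw [this]
    have hmodlt : ∀ a : ℕ, (a + 1) % p < p := fun a => Nat.mod_lt _ hp
    have hmodinj : ∀ a < p, ∀ b < p, (a + 1) % p = (b + 1) % p → a = b := by
      intro a ha b hb h
      rcases (by omega : a + 1 = p ∨ a + 1 < p) with h1 | h1 <;>
        rcases (by omega : b + 1 = p ∨ b + 1 < p) with h2 | h2
      · omega
      · rw [h1, Nat.mod_self, Nat.mod_eq_of_lt h2] at h; omega
      · rw [h2, Nat.mod_self, Nat.mod_eq_of_lt h1] at h; omega
      · rw [Nat.mod_eq_of_lt h1, Nat.mod_eq_of_lt h2] at h; omega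
    have hfinj : Function.Injective f := by
      intro x y hxy
      by_cases hx : ∃ j, j < p ∧ γ j = x <;> by_cases hy : ∃ j, j < p ∧ γ j = y
      · obtain ⟨a, ha, rfl⟩ := hx
        obtain ⟨b, hb, rfl⟩ := hy
        rw [hval a ha, hval b hb] at hxy
        have := hmodinj _ ha _ hb (hinj _ (hmodlt a) _ (hmodlt b) hxy)
        rw [this]
      · obtain ⟨a, ha, rfl⟩ := hx
        rw [hval a ha] at hxy
        have : f y = y := by simp only [hf]; rw [dif_neg hy]
        rw [this] at hxy
        exact absurd ⟨_, hmodlt a, hxy⟩ hy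
      · obtain ⟨b, hb, rfl⟩ := hy
        rw [hval b hb] at hxy
        have : f x = x := by simp only [hf]; rw [dif_neg hx]
        rw [this] at hxy
        exact absurd ⟨_, hmodlt b, hxy.symm⟩ hx
      · have h1 : f x = x := by simp only [hf]; rw [dif_neg hx]
        have h2 : f y = y := by simp only [hf]; rw [dif_neg hy]
        rw [h1, h2] at hxy
        exact hxy
    have hbij : Function.Bijective f := (Finite.injective_iff_bijective).mp hfinj
    set σ : Equiv.Perm (Fin n) := Equiv.ofBijective f hbij with hσ
    have hσapp : ∀ x, σ x = f x := fun x => rfl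
    have hσle : ∀ i, c i (σ i) ≤ c i i := by
      intro i
      rw [hσapp]
      by_cases hi : ∃ j, j < p ∧ γ j = i
      · obtain ⟨a, ha, rfl⟩ := hi
        rw [hval a ha, hmodγ a ha]
        have := hle a ha
        linarith
      · have : f i = i := by simp only [hf]; rw [dif_neg hi]
        rw [this]
    have heq := hP σ hσle (γ k)
    rw [hσapp, hval k hk, hmodγ k hk] at heq
    linarith

/-- Pareto efficiency of the identity allocation is equivalent to
cyclical consistency of R i j = c i j - c i i. -/
theorem stmt_6 {n : ℕ} (c : Fin n → Fin n → ℝ) :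
    (∀ σ : Equiv.Perm (Fin n), (∀ i, c i (σ i) ≤ c i i) → ∀ i, c i (σ i) = c i i)
      ↔ (∀ (p : ℕ) (γ : ℕ → Fin n), γ p = γ 0 →
          (∀ k < p, c (γ k) (γ (k + 1)) - c (γ k) (γ k) ≤ 0) →
          ∀ k < p, c (γ k) (γ (k + 1)) - c (γ k) (γ k) = 0) := by
  constructor
  · exact stmt6_aux c
  · intro hC σ hle i
    have hp : 0 < orderOf σ := orderOf_pos σ
    set γ : ℕ → Fin n := fun k => (σ ^ k) i with hγ
    have hcyc : γ (orderOf σ) = γ 0 := by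
      simp only [hγ, pow_orderOf_eq_one σ, pow_zero]
    have hstep : ∀ k, γ (k + 1) = σ (γ k) := by
      intro k
      simp only [hγ, pow_succ', Equiv.Perm.mul_apply]
    have hle' : ∀ k < orderOf σ, c (γ k) (γ (k + 1)) - c (γ k) (γ k) ≤ 0 := by
      intro k _
      rw [hstep]
      have := hle (γ k)
      linarith
    have := hC (orderOf σ) γ hcyc hle' 0 hp
    rw [hstep] at this
    simp only [hγ, pow_zero, Equiv.Perm.one_apply] at this
    linarith
end

section
/- First welfare theorem for the housing problem: if the identity allocation is a no-trade equilibrium supported by prices π (R i j < 0 implies π j > π i, and R i j ≤ 0 implies π j ≥ π i, where R i j = c i j − c i i), then the identity allocation is Pareto efficient: for every permutation σ, if c i (σ i) ≤ c i i for all i, then c i (σ i) = c i i for all i. -/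
/-- first welfare theorem for the housing problem. -/
theorem stmt_8 {n : ℕ} (c : Fin n → Fin n → ℝ) (π : Fin n → ℝ)
    (h1 : ∀ i j, c i j - c i i < 0 → π i < π j)
    (h2 : ∀ i j, c i j - c i i ≤ 0 → π i ≤ π j) :
    ∀ σ : Equiv.Perm (Fin n), (∀ i, c i (σ i) ≤ c i i) → ∀ i, c i (σ i) = c i i := by
  intro σ h i
  have hle : ∀ j ∈ Finset.univ, π j ≤ π (σ j) := fun j _ =>
    h2 j (σ j) (by linarith [h j])
  have hsum : ∑ j, π (σ j) = ∑ j, π j := Equiv.sum_comp σ π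
  have heq : π i = π (σ i) :=
    (Finset.sum_eq_sum_iff_of_le hle).mp hsum.symm i (Finset.mem_univ i)
  by_contra hne
  have hlt : c i (σ i) - c i i < 0 := lt_of_le_of_ne (by linarith [h i]) (by intro hc; exact hne (by linarith))
  exact absurd heq (ne_of_lt (h1 i (σ i) hlt))
end

section
/- Second welfare theorem for the housing problem: if the identity allocation is Pareto efficient (for every permutation σ, c i (σ i) ≤ c i i for all i implies c i (σ i) = c i i for all i), then there exists a price system π : Fin n → ℝ such that c i j < c i i implies π j > π i, and c i j ≤ c i i implies π j ≥ π i. -/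
/-!
Write `a ⇝ b` when agent `a` weakly prefers house `b` to their own, i.e. `c a b ≤ c a a`.
Pricing each house by the number of agents from which it is `⇝`-reachable makes prices weakly
increase along `⇝`. If `c i j < c i i` and `i` were reachable from `j`, a path without
repetitions from `j` to `i` would close with the edge `i ⇝ j` to a cycle; rotating the houses
along it weakly improves everyone and strictly improves `i`, against Pareto efficiency. Hence
`j` is counted in its own price but not in that of `i`.
-/

namespace List

variable {α : Type*} {r : α → α → Prop}

theorem exists_nodup_isChain_cons_of_relationReflTransGen {a b : α}
    (h : Relation.ReflTransGen r a b) :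
    ∃ l, (a :: l).Nodup ∧ IsChain r (a :: l) ∧ (a :: l).getLast (cons_ne_nil a l) = b := by
  induction h with
  | refl => exact ⟨[], nodup_singleton a, .singleton a, rfl⟩
  | @tail b c _ hbc ih =>
    obtain ⟨l, hnd, hch, hlast⟩ := ih
    by_cases hca : c = a
    · exact ⟨[], nodup_singleton a, .singleton a, hca.symm⟩
    by_cases hcl : c ∈ l
    · obtain ⟨s, t, rfl⟩ := append_of_mem hcl
      have hpre : a :: (s ++ [c]) <+: a :: (s ++ c :: t) := by simp
      exact ⟨s ++ [c], hpre.nodup hnd, hch.prefix hpre, by simp⟩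
    · have hc : c ∉ a :: l := by simp [hca, hcl]
      refine ⟨l ++ [c], ?_, ?_, by simp⟩
      · rw [← cons_append, ← concat_eq_append, nodup_concat]
        exact ⟨hc, hnd⟩
      · rw [← cons_append]
        exact hch.append (.singleton c) (by simpa [getLast?_eq_some_getLast, hlast] using hbc)

theorem rel_formPerm_of_isChain [DecidableEq α] {a : α} {l : List α} (hnd : (a :: l).Nodup)
    (hch : IsChain r (a :: l)) (hclose : r ((a :: l).getLast (cons_ne_nil a l)) a)
    {x : α} (hx : x ∈ a :: l) : r x (formPerm (a :: l) x) := by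
  obtain ⟨t, ht, rfl⟩ := mem_iff_getElem.mp hx
  rw [formPerm_apply_getElem _ hnd]
  rcases Nat.lt_or_ge (t + 1) (a :: l).length with hlt | hge
  · simp only [Nat.mod_eq_of_lt hlt]
    exact hch.getElem t hlt
  · have hlast : t = (a :: l).length - 1 := by omega
    subst hlast
    simpa [getLast_eq_getElem] using hclose

end List

section Ancestors

variable {α : Type*} [Finite α] (r : α → α → Prop)

noncomputable def numAncestors (a : α) : ℕ := {b | Relation.ReflTransGen r b a}.ncard

variable {r} {a b : α}

theorem numAncestors_le_of_reflTransGen (h : Relation.ReflTransGen r a b) :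
    numAncestors r a ≤ numAncestors r b :=
  Set.ncard_le_ncard (fun _ hk => Relation.ReflTransGen.trans hk h) (Set.toFinite _)

theorem numAncestors_lt_of_reflTransGen (h : Relation.ReflTransGen r a b)
    (hba : ¬ Relation.ReflTransGen r b a) : numAncestors r a < numAncestors r b :=
  Set.ncard_lt_ncard
    (Set.ssubset_iff_of_subset (fun _ hk => Relation.ReflTransGen.trans hk h) |>.2
      ⟨b, Relation.ReflTransGen.refl, hba⟩) (Set.toFinite _)

end Ancestors

section Housing

variable {α β : Type*} [Preorder β]

def IsParetoEfficient (c : α → α → β) : Prop :=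
  ∀ σ : Equiv.Perm α, (∀ i, c i (σ i) ≤ c i i) → ∀ i, c i (σ i) = c i i

theorem IsParetoEfficient.not_reflTransGen {c : α → α → β} (hc : IsParetoEfficient c)
    {i j : α} (hij : c i j < c i i) :
    ¬ Relation.ReflTransGen (fun a b => c a b ≤ c a a) j i := by
  classical
  intro hji
  obtain ⟨l, hnd, hch, hlast⟩ := List.exists_nodup_isChain_cons_of_relationReflTransGen hji
  set σ := List.formPerm (j :: l)
  have hσi : σ i = j := hlast ▸ List.formPerm_apply_getLast j l
  have hσ : ∀ k, c k (σ k) ≤ c k k := by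
    intro k
    by_cases hk : k ∈ j :: l
    · exact List.rel_formPerm_of_isChain hnd hch (hlast ▸ hij.le) hk
    · rw [List.formPerm_apply_of_notMem hk]
  have := hc σ hσ i
  rw [hσi] at this
  exact hij.ne this

end Housing

/-- second welfare theorem for the housing problem. -/
theorem stmt_9 {n : ℕ} (c : Fin n → Fin n → ℝ)
    (hPareto : ∀ σ : Equiv.Perm (Fin n),
      (∀ i, c i (σ i) ≤ c i i) → ∀ i, c i (σ i) = c i i) :
    ∃ π : Fin n → ℝ,
      (∀ i j, c i j < c i i → π i < π j) ∧
      (∀ i j, c i j ≤ c i i → π i ≤ π j) := by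
  let R : Fin n → Fin n → Prop := fun a b => c a b ≤ c a a
  refine ⟨fun i => numAncestors R i, fun i j hij => ?_, fun i j hij => ?_⟩
  · exact Nat.cast_lt.mpr <| numAncestors_lt_of_reflTransGen (r := R) (.single hij.le)
      (IsParetoEfficient.not_reflTransGen hPareto hij)
  · exact Nat.cast_le.mpr <| numAncestors_le_of_reflTransGen (r := R) (.single hij)
end

section
/- Let R be an n×n real matrix with zero diagonal. The data are rationalizable (there exist v_i and λ_i > 0 with v_j − v_i ≤ λ_i · R i j for all i,j) if and only if there exist weights λ_i > 0 such that min over permutations σ of Σ_i λ_i · R i (σ i) equals 0. -/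
open List Finset

namespace Stmt10Aux

variable {n : ℕ}

/-- Cost of a walk given edge costs `c`. -/
def wcost (c : Fin n → Fin n → ℝ) : List (Fin n) → ℝ
  | [] => 0
  | [_] => 0
  | a :: b :: t => c a b + wcost c (b :: t)

variable (c : Fin n → Fin n → ℝ)

lemma wcost_append : ∀ (l1 : List (Fin n)) (x : Fin n) (l2 : List (Fin n)),
    wcost c (l1 ++ x :: l2) = wcost c (l1 ++ [x]) + wcost c (x :: l2)
  | [], x, l2 => by cases l2 <;> simp [wcost]
  | [a], x, l2 => by cases l2 <;> simp [wcost]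
  | a :: b :: l1, x, l2 => by
    have ih := wcost_append (b :: l1) x l2
    simp only [cons_append, append_eq, wcost] at ih ⊢
    rw [ih]; ring

lemma wcost_eq_sum (d : Fin n) : ∀ l : List (Fin n),
    wcost c l = ∑ t ∈ Finset.range (l.length - 1), c (l.getD t d) (l.getD (t + 1) d)
  | [] => by simp [wcost]
  | [a] => by simp [wcost]
  | a :: b :: t => by
    have ih := wcost_eq_sum d (b :: t)
    show c a b + wcost c (b :: t) = _
    have hlen : (a :: b :: t).length - 1 = t.length + 1 := by simp
    rw [ih, hlen, Finset.sum_range_succ']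
    simp only [List.getD_cons_succ, List.getD_cons_zero, List.length_cons,
      Nat.add_sub_cancel]
    ring

lemma map_sum_eq_range (d : Fin n) (g : Fin n → ℝ) : ∀ q : List (Fin n),
    (q.map g).sum = ∑ t ∈ Finset.range q.length, g (q.getD t d)
  | [] => by simp
  | a :: q => by
    have ih := map_sum_eq_range d g q
    simp only [List.map_cons, List.sum_cons, List.length_cons]
    rw [Finset.sum_range_succ']
    simp only [List.getD_cons_succ, List.getD_cons_zero]
    rw [ih]; ring

lemma perm_sum (hd : ∀ i, c i i = 0) (a : Fin n) (m : List (Fin n))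
    (hnd : (a :: m).Nodup) :
    ∑ i, c i ((a :: m).formPerm i) = wcost c ((a :: m) ++ [a]) := by
  classical
  set p : List (Fin n) := a :: m with hp
  have hsub : p.toFinset ⊆ Finset.univ := Finset.subset_univ _
  have h1 : ∑ i ∈ p.toFinset, c i (p.formPerm i) = ∑ i, c i (p.formPerm i) := by
    refine Finset.sum_subset hsub (fun x _ hx => ?_)
    rw [List.formPerm_apply_of_notMem (by simpa using hx), hd]
  rw [← h1]
  rw [List.sum_toFinset _ hnd, map_sum_eq_range a (fun i => c i (p.formPerm i)) p]
  rw [wcost_eq_sum c a]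
  have hlen : (p ++ [a]).length - 1 = p.length := by simp
  rw [hlen]
  refine Finset.sum_congr rfl (fun t ht => ?_)
  rw [Finset.mem_range] at ht
  have hget : ∀ (q : List (Fin n)) (i : ℕ) (h : i < q.length), q.getD i a = q[i] := by
    intro q i h
    rw [List.getD_eq_getElem?_getD, List.getElem?_eq_getElem h]; rfl
  have h2 : (p ++ [a]).getD t a = p.getD t a := by
    rw [hget _ t (by simp; omega), hget _ t ht, List.getElem_append_left ht]
  rw [h2, hget _ t ht, List.formPerm_apply_getElem _ hnd t ht]
  congr 1
  by_cases hlt : t + 1 < p.length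
  · rw [hget _ (t+1) (by simp; omega), List.getElem_append_left hlt]
    simp [Nat.mod_eq_of_lt hlt]
  · have he : t + 1 = p.length := by omega
    have hmod : (t + 1) % p.length = 0 := by rw [he, Nat.mod_self]
    have h3 : (p ++ [a]).getD (t+1) a = a := by
      rw [hget _ (t+1) (by simp; omega), List.getElem_append_right (by omega)]
      simp [he]
    rw [h3]
    simp only [hmod]
    simp [hp]

lemma closed_nonneg (hd : ∀ i, c i i = 0)
    (hperm : ∀ σ : Equiv.Perm (Fin n), 0 ≤ ∑ i, c i (σ i)) :
    ∀ (k : ℕ) (a : Fin n) (m : List (Fin n)), m.length ≤ k →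
      0 ≤ wcost c ((a :: m) ++ [a]) := by
  intro k
  induction k with
  | zero =>
    intro a m hm
    have : m = [] := List.length_eq_zero_iff.mp (Nat.le_zero.mp hm)
    subst this
    simp [wcost, hd]
  | succ k ih =>
    intro a m hm
    by_cases hnd : (a :: m).Nodup
    · rw [← perm_sum c hd a m hnd]
      exact hperm _
    · -- find a duplicate decomposition  a :: m = l1 ++ x :: (l2 ++ x :: l3)
      have hdup : ∀ (l : List (Fin n)), ¬l.Nodup →
          ∃ (x : Fin n) (l1 l2 l3 : List (Fin n)), l = l1 ++ x :: (l2 ++ x :: l3) := by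
        intro l
        induction l with
        | nil => intro h; exact absurd List.nodup_nil h
        | cons b t iht =>
          intro h
          by_cases hb : b ∈ t
          · obtain ⟨s, u, rfl⟩ := List.append_of_mem hb
            exact ⟨b, [], s, u, rfl⟩
          · have hnt : ¬t.Nodup := fun hnt => h (List.nodup_cons.mpr ⟨hb, hnt⟩)
            obtain ⟨x, l1, l2, l3, rfl⟩ := iht hnt
            exact ⟨x, b :: l1, l2, l3, rfl⟩
      obtain ⟨x, l1, l2, l3, hdec⟩ := hdup _ hnd
      cases l1 with
      | nil =>
        -- a = x, m = l2 ++ a :: l3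
        simp only [List.nil_append] at hdec
        obtain ⟨rfl, rfl⟩ : a = x ∧ m = l2 ++ x :: l3 :=
          ⟨(List.cons_eq_cons.mp hdec).1, (List.cons_eq_cons.mp hdec).2⟩
        simp only [List.length_append, List.length_cons] at hm
        have key : wcost c ((a :: (l2 ++ a :: l3)) ++ [a])
            = wcost c ((a :: l2) ++ [a]) + wcost c ((a :: l3) ++ [a]) := by
          have h' := wcost_append c (a :: l2) a (l3 ++ [a])
          simp only [cons_append, append_assoc, cons_append, nil_append,
            singleton_append] at h' ⊢
          rw [h']
        rw [key]
        have h1 := ih a l2 (by omega)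
        have h2 := ih a l3 (by omega)
        linarith
      | cons b l1' =>
        have hb : b = a := (List.cons_eq_cons.mp hdec).1.symm
        subst hb
        have hm' : m = l1' ++ x :: (l2 ++ x :: l3) := (List.cons_eq_cons.mp hdec).2
        subst hm'
        simp only [List.length_append, List.length_cons] at hm
        -- split costs
        have e1 : wcost c ((b :: (l1' ++ x :: (l2 ++ x :: l3))) ++ [b])
            = wcost c ((b :: l1') ++ [x]) + wcost c (x :: (l2 ++ x :: (l3 ++ [b]))) := by
          have h' := wcost_append c (b :: l1') x (l2 ++ x :: (l3 ++ [b]))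
          simp only [cons_append, append_assoc, cons_append, nil_append,
            singleton_append] at h' ⊢
          rw [h']
        have e2 : wcost c (x :: (l2 ++ x :: (l3 ++ [b])))
            = wcost c ((x :: l2) ++ [x]) + wcost c (x :: (l3 ++ [b])) := by
          have h' := wcost_append c (x :: l2) x (l3 ++ [b])
          simp only [cons_append, append_assoc, cons_append, nil_append,
            singleton_append] at h' ⊢
          rw [h']
        have e3 : wcost c ((b :: (l1' ++ x :: l3)) ++ [b])
            = wcost c ((b :: l1') ++ [x]) + wcost c (x :: (l3 ++ [b])) := by
          have h' := wcost_append c (b :: l1') x (l3 ++ [b])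
          simp only [cons_append, append_assoc, cons_append, nil_append,
            singleton_append] at h' ⊢
          rw [h']
        have h1 := ih x l2 (by omega)
        have h2 := ih b (l1' ++ x :: l3)
          (by simp only [List.length_append, List.length_cons]; omega)
        rw [e3] at h2
        rw [e1, e2]
        linarith

end Stmt10Aux

/-- rationalizability iff for some positive weights the weighted
assignment problem has minimum 0 (attained, with all values nonnegative). -/
theorem stmt_10 {n : ℕ} (R : Fin n → Fin n → ℝ) (hdiag : ∀ i, R i i = 0) :
    (∃ (v w : Fin n → ℝ), (∀ i, 0 < w i) ∧ ∀ i j, v j - v i ≤ w i * R i j)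
      ↔ (∃ w : Fin n → ℝ, (∀ i, 0 < w i) ∧
          IsLeast {x : ℝ | ∃ σ : Equiv.Perm (Fin n), x = ∑ i, w i * R i (σ i)} 0) := by
  constructor
  · rintro ⟨v, w, hw, hvw⟩
    refine ⟨w, hw, ⟨⟨1, by simp [hdiag]⟩, ?_⟩⟩
    rintro x ⟨σ, rfl⟩
    have h1 : ∀ i, v (σ i) - v i ≤ w i * R i (σ i) := fun i => hvw i (σ i)
    have h2 : ∑ i, (v (σ i) - v i) ≤ ∑ i, w i * R i (σ i) :=
      Finset.sum_le_sum (fun i _ => h1 i)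
    have h3 : ∑ i, (v (σ i) - v i) = 0 := by
      rw [Finset.sum_sub_distrib]
      rw [Equiv.sum_comp σ v]
      ring
    linarith
  · rintro ⟨w, hw, hleast⟩
    rcases Nat.eq_zero_or_pos n with hn | hn
    · subst hn
      exact ⟨fun i => i.elim0, fun i => i.elim0, fun i => i.elim0, fun i => i.elim0⟩
    · set c : Fin n → Fin n → ℝ := fun i j => w i * R i j with hc
      have hd : ∀ i, c i i = 0 := fun i => by simp [hc, hdiag]
      have hperm : ∀ σ : Equiv.Perm (Fin n), 0 ≤ ∑ i, c i (σ i) :=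
        fun σ => hleast.2 ⟨σ, rfl⟩
      have hclosed : ∀ (a : Fin n) (m : List (Fin n)),
          0 ≤ Stmt10Aux.wcost c ((a :: m) ++ [a]) :=
        fun a m => Stmt10Aux.closed_nonneg c hd hperm m.length a m le_rfl
      set j0 : Fin n := ⟨0, hn⟩ with hj0
      set S : Fin n → Set ℝ :=
        fun j => {x | ∃ m : List (Fin n), Stmt10Aux.wcost c (j0 :: (m ++ [j])) = x}
        with hS
      have hSne : ∀ j, (S j).Nonempty := fun j => ⟨_, ⟨[], rfl⟩⟩
      have hSbdd : ∀ j, BddBelow (S j) := by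
        intro j
        refine ⟨-c j j0, ?_⟩
        rintro x ⟨m, rfl⟩
        have h0 := hclosed j0 (m ++ [j])
        have he : Stmt10Aux.wcost c ((j0 :: (m ++ [j])) ++ [j0])
            = Stmt10Aux.wcost c (j0 :: (m ++ [j])) + c j j0 := by
          have h' := Stmt10Aux.wcost_append c (j0 :: m) j [j0]
          simpa [Stmt10Aux.wcost] using h'
        linarith [h0, he]
      set v : Fin n → ℝ := fun j => sInf (S j) with hv
      refine ⟨v, w, hw, ?_⟩
      intro i j
      show v j - v i ≤ w i * R i j
      have key : v j - c i j ≤ v i := by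
        apply le_csInf (hSne i)
        rintro x ⟨m, rfl⟩
        have hmem : Stmt10Aux.wcost c (j0 :: (m ++ [i])) + c i j ∈ S j := by
          refine ⟨m ++ [i], ?_⟩
          have h' := Stmt10Aux.wcost_append c (j0 :: m) i [j]
          simpa [Stmt10Aux.wcost] using h'
        have hle := csInf_le (hSbdd j) hmem
        linarith [hle]
      have : c i j = w i * R i j := rfl
      linarith [key]
end

section
/- Suppose R is an n×n real matrix with zero diagonal and R i j ≠ 0 for i ≠ j. If there exist v : Fin n → ℝ and λ : Fin n → ℝ with λ ≥ 0, λ not identically zero, and v_j − v_i ≤ λ_i R i j for all i,j, then the set I = {i | λ_i > 0} is coherent (i ∈ I and R i j < 0 imply j ∈ I) and the restricted data on I are rationalizable (exist weights μ_i > 0 and utilities u_i for i ∈ I with u_j − u_i ≤ μ_i R i j for all i,j ∈ I). -/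
/-- weak rationalization yields a coherent rationalizable subset. -/
theorem stmt_15 {n : ℕ} (R : Fin n → Fin n → ℝ) (hdiag : ∀ i, R i i = 0)
    (hne : ∀ i j, i ≠ j → R i j ≠ 0)
    (v w : Fin n → ℝ) (hw : ∀ i, 0 ≤ w i) (hw0 : ∃ i, w i ≠ 0)
    (h : ∀ i j, v j - v i ≤ w i * R i j) :
    (∀ i j, w i > 0 → R i j < 0 → w j > 0) ∧
    (∃ u μ : Fin n → ℝ, (∀ i, w i > 0 → 0 < μ i) ∧
      ∀ i j, w i > 0 → w j > 0 → u j - u i ≤ μ i * R i j) := by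
  constructor
  · intro i j hi hij
    rcases lt_or_eq_of_le (hw j) with hj | hj
    · exact hj
    · exfalso
      have h1 : v j - v i < 0 := lt_of_le_of_lt (h i j) (mul_neg_of_pos_of_neg hi hij)
      have h2 : v i - v j ≤ 0 := by
        have := h j i; rw [← hj] at this; simpa using this
      linarith
  · exact ⟨v, w, fun i hi => hi, fun i j _ _ => h i j⟩
end

section
/- Suppose R is an n×n real matrix with zero diagonal and R i j ≠ 0 for i ≠ j. If I ⊆ {1,...,n} is a coherent subset (i ∈ I and R i j < 0 imply j ∈ I) and the data restricted to I are rationalizable (∃ u_i, μ_i > 0 for i ∈ I with u_j − u_i ≤ μ_i R i j for i,j ∈ I), then there exist v : Fin n → ℝ and λ : Fin n → ℝ with λ ≥ 0, not all zero, such that v_j − v_i ≤ λ_i · R i j for all i, j. -/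
open Real

/-- a coherent rationalizable subset yields weak rationalization. -/
theorem stmt_16 {n : ℕ} (R : Fin n → Fin n → ℝ) (hdiag : ∀ i, R i i = 0)
    (hne : ∀ i j, i ≠ j → R i j ≠ 0)
    (I : Set (Fin n)) (hI : I.Nonempty)
    (hcoh : ∀ i ∈ I, ∀ j, R i j < 0 → j ∈ I)
    (u μ : Fin n → ℝ) (hμ : ∀ i ∈ I, 0 < μ i)
    (hrat : ∀ i ∈ I, ∀ j ∈ I, u j - u i ≤ μ i * R i j) :
    ∃ v w : Fin n → ℝ, (∀ i, 0 ≤ w i) ∧ (∃ i, w i ≠ 0) ∧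
      ∀ i j, v j - v i ≤ w i * R i j := by
  classical
  obtain ⟨i0, hi0⟩ := hI
  haveI : Nonempty (Fin n) := ⟨i0⟩
  set f : Fin n × Fin n → ℝ := fun p =>
    if p.1 ∈ I ∧ p.2 ∉ I then 1 / (μ p.1 * R p.1 p.2) else 0 with hf
  set t : ℝ := 1 ⊔ (Finset.univ.sup' Finset.univ_nonempty f) with htdef
  have ht1 : (1 : ℝ) ≤ t := le_sup_left
  have ht0 : 0 < t := lt_of_lt_of_le one_pos ht1
  have hpos : ∀ i ∈ I, ∀ j, j ∉ I → 0 < μ i * R i j := by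
    intro i hi j hj
    have hij : i ≠ j := fun h => hj (h ▸ hi)
    have hR : 0 < R i j :=
      lt_of_le_of_ne (not_lt.mp fun h => hj (hcoh i hi j h)) (Ne.symm (hne i j hij))
    exact mul_pos (hμ i hi) hR
  have hkey : ∀ i ∈ I, ∀ j, j ∉ I → 1 ≤ t * (μ i * R i j) := by
    intro i hi j hj
    have hft : f (i, j) ≤ t :=
      le_trans (Finset.le_sup' f (Finset.mem_univ (i, j))) le_sup_right
    have hfv : f (i, j) = 1 / (μ i * R i j) := if_pos ⟨hi, hj⟩
    rw [hfv] at hft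
    exact (div_le_iff₀ (hpos i hi j hj)).mp hft
  refine ⟨fun i => if i ∈ I then -Real.exp (-t * u i) else 0,
    fun i => if i ∈ I then t * Real.exp (-t * u i) * μ i else 0, ?_, ⟨i0, ?_⟩, ?_⟩
  · intro i
    by_cases hi : i ∈ I
    · simp only [if_pos hi]
      have := hμ i hi
      positivity
    · simp [hi]
  · simp only [if_pos hi0]
    have := Real.exp_pos (-t * u i0)
    have := hμ i0 hi0
    positivity
  · intro i j
    by_cases hi : i ∈ I
    · by_cases hj : j ∈ I
      · simp only [if_pos hi, if_pos hj]
        have hx : (-t * (u j - u i)) + 1 ≤ Real.exp (-t * (u j - u i)) :=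
          Real.add_one_le_exp _
        have hsplit : Real.exp (-t * u j) = Real.exp (-t * u i) * Real.exp (-t * (u j - u i)) := by
          rw [← Real.exp_add]; ring_nf
        have hep : 0 < Real.exp (-t * u i) := Real.exp_pos _
        have hr := hrat i hi j hj
        rw [hsplit]
        nlinarith [mul_le_mul_of_nonneg_left hx hep.le,
          mul_le_mul_of_nonneg_left hr (mul_pos ht0 hep).le]
      · simp only [if_pos hi, if_neg hj]
        have hep : 0 < Real.exp (-t * u i) := Real.exp_pos _
        have hk := hkey i hi j hj
        nlinarith [mul_le_mul_of_nonneg_left hk hep.le]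
    · by_cases hj : j ∈ I
      · simp only [if_neg hi, if_pos hj]
        have := Real.exp_pos (-t * u j)
        nlinarith
      · simp [hi, hj]
end
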